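/- arXiv:0911.2432 — 2 statements merged into one kernel-verified Lean document; each statement's English description precedes it below -/
import Mathlib

section
/- For a smooth function ψ : ℝ² → ℂ satisfying L₋ψ = 0, i.e., ∂₁ψ + i∂₂ψ + (1/2)x₁ψ + (i/2)x₂ψ = 0, the identity Im(ψ̄ ∇_{A₀}ψ) = -(1/2) curl* |ψ|² holds, where A₀(x) = (1/2)(-x₂, x₁), ∇_{A₀}ψ = ∇ψ - iA₀ψ, and curl* f = (∂₂f, -∂₁f). -/
noncomputable section
open Complex

def d1 {E : Type*} [NormedAddCommGroup E] [NormedSpace ℝ E] (f : ℝ × ℝ → E) (x : ℝ × ℝ) : E :=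
  fderiv ℝ f x (1, 0)

def d2 {E : Type*} [NormedAddCommGroup E] [NormedSpace ℝ E] (f : ℝ × ℝ → E) (x : ℝ × ℝ) : E :=
  fderiv ℝ f x (0, 1)

/-- The magnetic potential `A₀(x) = (1/2)(-x₂, x₁)`. -/
def A0 (x : ℝ × ℝ) : ℝ × ℝ := (-(1 / 2 : ℝ) * x.2, (1 / 2 : ℝ) * x.1)

/-- `curl* f = (∂₂f, -∂₁f)` for a scalar function `f`. -/
def curlStar (f : ℝ × ℝ → ℝ) (x : ℝ × ℝ) : ℝ × ℝ := (d2 f x, -(d1 f x))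

/-- The supercurrent `Im(ψ̄ ∇_A ψ)`, where `∇_A ψ = ∇ψ - iAψ`. -/
def superCurrent (A : ℝ × ℝ → ℝ × ℝ) (ψ : ℝ × ℝ → ℂ) (x : ℝ × ℝ) : ℝ × ℝ :=
  (((starRingEnd ℂ) (ψ x) * (d1 ψ x - I * ((A x).1 : ℂ) * ψ x)).im,
   ((starRingEnd ℂ) (ψ x) * (d2 ψ x - I * ((A x).2 : ℂ) * ψ x)).im)

lemma fderiv_normSq_comp (ψ : ℝ × ℝ → ℂ) (hψ : ContDiff ℝ (⊤ : ℕ∞) ψ) (x v : ℝ × ℝ) :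
    fderiv ℝ (fun y => Complex.normSq (ψ y)) x v =
      2 * ((ψ x).re * (fderiv ℝ ψ x v).re + (ψ x).im * (fderiv ℝ ψ x v).im) := by
  have hD : HasFDerivAt ψ (fderiv ℝ ψ x) x :=
    (hψ.differentiable (by simp) x).hasFDerivAt
  have hre : HasFDerivAt (fun y => (ψ y).re) (Complex.reCLM.comp (fderiv ℝ ψ x)) x :=
    (Complex.reCLM.hasFDerivAt).comp x hD
  have him : HasFDerivAt (fun y => (ψ y).im) (Complex.imCLM.comp (fderiv ℝ ψ x)) x :=
    (Complex.imCLM.hasFDerivAt).comp x hD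
  have h : HasFDerivAt (fun y => Complex.normSq (ψ y))
      ((ψ x).re • (Complex.reCLM.comp (fderiv ℝ ψ x)) + (ψ x).re • (Complex.reCLM.comp (fderiv ℝ ψ x))
        + ((ψ x).im • (Complex.imCLM.comp (fderiv ℝ ψ x)) + (ψ x).im • (Complex.imCLM.comp (fderiv ℝ ψ x)))) x := by
    have := (hre.mul hre).add (him.mul him)
    simpa [Complex.normSq_apply, Pi.add_def, Pi.mul_def] using this
  rw [h.fderiv]
  simp
  ring

/-- If `ψ` is smooth and satisfies `L₋ψ = 0`, then
`Im(ψ̄ ∇_{A₀}ψ) = -(1/2) curl* |ψ|²`. -/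
theorem superCurrent_eq_neg_half_curlStar_normSq (ψ : ℝ × ℝ → ℂ) (hψ : ContDiff ℝ (⊤ : ℕ∞) ψ)
    (hL : ∀ x : ℝ × ℝ, d1 ψ x + I * d2 ψ x + (1 / 2 : ℂ) * x.1 * ψ x + I * (1 / 2 : ℂ) * x.2 * ψ x = 0) :
    ∀ x, superCurrent A0 ψ x = (-(1 / 2 : ℝ)) • curlStar (fun y => Complex.normSq (ψ y)) x := by
  intro x
  have hL' := hL x
  have h1 : d1 (fun y => Complex.normSq (ψ y)) x =
      2 * ((ψ x).re * (d1 ψ x).re + (ψ x).im * (d1 ψ x).im) :=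
    fderiv_normSq_comp ψ hψ x (1, 0)
  have h2 : d2 (fun y => Complex.normSq (ψ y)) x =
      2 * ((ψ x).re * (d2 ψ x).re + (ψ x).im * (d2 ψ x).im) :=
    fderiv_normSq_comp ψ hψ x (0, 1)
  rw [Complex.ext_iff] at hL'
  obtain ⟨e1, e2⟩ := hL'
  simp only [Complex.add_re, Complex.add_im, Complex.mul_re, Complex.mul_im, Complex.I_re,
    Complex.I_im, Complex.ofReal_re, Complex.ofReal_im, Complex.zero_re, Complex.zero_im,
    Complex.div_re, Complex.div_im, Complex.one_re, Complex.one_im, Complex.re_ofNat, Complex.normSq_apply,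
    Complex.im_ofNat] at e1 e2
  simp only [superCurrent, curlStar, A0, Prod.smul_mk, smul_eq_mul, h1, h2, Prod.mk.injEq,
    Complex.mul_im, Complex.sub_re, Complex.sub_im, Complex.mul_re, Complex.I_re, Complex.I_im,
    Complex.ofReal_re, Complex.ofReal_im, Complex.conj_re, Complex.conj_im, map_mul]
  ring_nf at e1 e2 ⊢
  constructor
  · linear_combination (-(ψ x).im) * e1 + (ψ x).re * e2
  · linear_combination (-(ψ x).re) * e1 + (-(ψ x).im) * e2
end
end

section
/- Let Ω ⊂ ℝ² be a fundamental cell of a lattice ℒ, and let (ψ, A) be a smooth ℒ-lattice state (i.e., for each t ∈ ℒ there is a smooth g_t with ψ(x+t) = e^{ig_t(x)}ψ(x) and A(x+t) = A(x) + ∇g_t(x)) with |ψ| > 0 on ∂Ω. Then the magnetic flux is quantized: ∫_Ω curl A = 2πn for some integer n. -/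
noncomputable section
open Complex Real MeasureTheory Set

/-- `curl A = ∂₁A₂ - ∂₂A₁`. -/
def curl (A : ℝ × ℝ → ℝ × ℝ) (x : ℝ × ℝ) : ℝ :=
  d1 (fun y => (A y).2) x - d2 (fun y => (A y).1) x

/- ### Auxiliary material -/

def Lmap (t₁ t₂ : ℝ × ℝ) : (ℝ × ℝ) →L[ℝ] (ℝ × ℝ) :=
  (ContinuousLinearMap.fst ℝ ℝ ℝ).smulRight t₁ + (ContinuousLinearMap.snd ℝ ℝ ℝ).smulRight t₂

lemma Lmap_apply (t₁ t₂ : ℝ × ℝ) (p : ℝ × ℝ) : Lmap t₁ t₂ p = p.1 • t₁ + p.2 • t₂ := rfl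

def phi (t : ℝ × ℝ) : (ℝ × ℝ) →L[ℝ] ℝ :=
  t.1 • ContinuousLinearMap.fst ℝ ℝ ℝ + t.2 • ContinuousLinearMap.snd ℝ ℝ ℝ

lemma phi_apply (t v : ℝ × ℝ) : phi t v = t.1 * v.1 + t.2 * v.2 := rfl

lemma Lmap_det (t₁ t₂ : ℝ × ℝ) : (Lmap t₁ t₂).det = t₁.1 * t₂.2 - t₁.2 * t₂.1 := by
  rw [ContinuousLinearMap.det, ← LinearMap.det_toMatrix (Module.Basis.finTwoProd ℝ), Matrix.det_fin_two]
  simp [LinearMap.toMatrix_apply, Module.Basis.coe_finTwoProd_repr, Module.Basis.finTwoProd_zero,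
    Module.Basis.finTwoProd_one, Lmap]
  ring

lemma pair_det_ne_zero {t₁ t₂ : ℝ × ℝ} (hind : LinearIndependent ℝ ![t₁, t₂]) :
    t₁.1 * t₂.2 - t₁.2 * t₂.1 ≠ 0 := by
  intro hD
  rw [LinearIndependent.pair_iff] at hind
  have h1 := hind t₂.2 (-t₁.2) (by
    apply Prod.ext <;> simp <;> nlinarith)
  have h2 := hind t₂.1 (-t₁.1) (by
    apply Prod.ext <;> simp <;> nlinarith [h1.1, h1.2])
  have := hind 1 0 (by
    apply Prod.ext <;> simp <;> linarith [h1.2, h2.2])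
  exact one_ne_zero this.1

lemma Lmap_inj {t₁ t₂ : ℝ × ℝ} (hind : LinearIndependent ℝ ![t₁, t₂]) :
    Function.Injective (Lmap t₁ t₂) := by
  rw [LinearIndependent.pair_iff] at hind
  intro p q h
  rw [Lmap_apply, Lmap_apply] at h
  have : (p.1 - q.1) • t₁ + (p.2 - q.2) • t₂ = 0 := by
    linear_combination (norm := module) h
  have := hind _ _ this
  have h1 : p.1 = q.1 := by linarith [this.1]
  have h2 : p.2 = q.2 := by linarith [this.2]
  exact Prod.ext h1 h2

lemma zero_mem_frontier {t₁ t₂ : ℝ × ℝ} (hinj : Function.Injective (Lmap t₁ t₂)) :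
    (0 : ℝ × ℝ) ∈ frontier ((Lmap t₁ t₂) '' (Ico (0:ℝ) 1 ×ˢ Ico (0:ℝ) 1)) := by
  constructor
  · apply subset_closure
    exact ⟨(0,0), ⟨⟨le_refl 0, zero_lt_one⟩, ⟨le_refl 0, zero_lt_one⟩⟩, by simp [Lmap_apply]⟩
  · intro hmem
    rw [mem_interior_iff_mem_nhds, Metric.mem_nhds_iff] at hmem
    obtain ⟨ε, hε, hball⟩ := hmem
    set C := ‖t₁‖ + ‖t₂‖ + 1 with hC
    have hCpos : 0 < C := by positivity
    set δ := min (ε / (2 * C)) 1 with hδdef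
    have hδpos : 0 < δ := lt_min (by positivity) one_pos
    have hmemball : Lmap t₁ t₂ (-δ, -δ) ∈ Metric.ball (0:ℝ×ℝ) ε := by
      rw [Metric.mem_ball, dist_zero_right, Lmap_apply]
      have h1 : ‖(-δ) • t₁ + (-δ) • t₂‖ ≤ δ * ‖t₁‖ + δ * ‖t₂‖ := by
        calc ‖(-δ) • t₁ + (-δ) • t₂‖ ≤ ‖(-δ) • t₁‖ + ‖(-δ) • t₂‖ := norm_add_le _ _
        _ = δ * ‖t₁‖ + δ * ‖t₂‖ := by
            rw [norm_smul, norm_smul]; simp [abs_of_pos hδpos]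
      have h2 : δ * ‖t₁‖ + δ * ‖t₂‖ ≤ δ * C := by nlinarith [norm_nonneg t₁, norm_nonneg t₂]
      have h3 : δ * C ≤ ε / 2 := by
        have : δ ≤ ε / (2 * C) := min_le_left _ _
        calc δ * C ≤ (ε / (2*C)) * C := by nlinarith
        _ = ε / 2 := by field_simp
      linarith
    obtain ⟨p, hp, hpeq⟩ := hball hmemball
    have : p = (-δ, -δ) := hinj hpeq
    rw [this] at hp
    exact absurd hp.1.1 (by simpa using hδpos)

lemma clm_decomp {E : Type*} [NormedAddCommGroup E] [NormedSpace ℝ E]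
    (ℓ : (ℝ × ℝ) →L[ℝ] E) (v : ℝ × ℝ) : ℓ v = v.1 • ℓ (1,0) + v.2 • ℓ (0,1) := by
  have : v = v.1 • ((1:ℝ),(0:ℝ)) + v.2 • ((0:ℝ),(1:ℝ)) := by
    apply Prod.ext <;> simp
  rw [show ℓ v = ℓ (v.1 • ((1:ℝ),(0:ℝ)) + v.2 • ((0:ℝ),(1:ℝ))) from by rw [← this]]
  rw [map_add, ℓ.map_smul, ℓ.map_smul]

lemma fderiv_snd_comp {y : ℝ × ℝ} (A : ℝ × ℝ → ℝ × ℝ) (hA : DifferentiableAt ℝ A y) (v : ℝ × ℝ) :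
    fderiv ℝ (fun y => (A y).2) y v = (fderiv ℝ A y v).2 := by
  have : (fun y => (A y).2) = (ContinuousLinearMap.snd ℝ ℝ ℝ) ∘ A := rfl
  rw [this, fderiv_comp _ (ContinuousLinearMap.snd ℝ ℝ ℝ).differentiableAt hA]
  rw [(ContinuousLinearMap.snd ℝ ℝ ℝ).fderiv]
  rfl

lemma fderiv_fst_comp {y : ℝ × ℝ} (A : ℝ × ℝ → ℝ × ℝ) (hA : DifferentiableAt ℝ A y) (v : ℝ × ℝ) :
    fderiv ℝ (fun y => (A y).1) y v = (fderiv ℝ A y v).1 := by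
  have : (fun y => (A y).1) = (ContinuousLinearMap.fst ℝ ℝ ℝ) ∘ A := rfl
  rw [this, fderiv_comp _ (ContinuousLinearMap.fst ℝ ℝ ℝ).differentiableAt hA]
  rw [(ContinuousLinearMap.fst ℝ ℝ ℝ).fderiv]
  rfl

lemma curl_pullback (t₁ t₂ : ℝ × ℝ) (A : ℝ × ℝ → ℝ × ℝ) (y : ℝ × ℝ)
    (hA : DifferentiableAt ℝ A y) :
    phi t₂ (fderiv ℝ A y t₁) - phi t₁ (fderiv ℝ A y t₂)
      = (t₁.1 * t₂.2 - t₁.2 * t₂.1) * curl A y := by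
  rw [phi_apply, phi_apply]
  have e1 := clm_decomp (fderiv ℝ A y) t₁
  have e2 := clm_decomp (fderiv ℝ A y) t₂
  rw [e1, e2]
  rw [curl, d1, d2, fderiv_snd_comp A hA, fderiv_fst_comp A hA]
  simp only [Prod.fst_add, Prod.snd_add, Prod.smul_fst, Prod.smul_snd, smul_eq_mul]
  ring

lemma ray_integral (g : ℝ × ℝ → ℝ) (hg : ContDiff ℝ (⊤ : ℕ∞) g) (t : ℝ × ℝ) :
    ∫ y in (0:ℝ)..1, fderiv ℝ g (y • t) t = g t - g 0 := by
  have key : ∀ y : ℝ, HasDerivAt (fun y : ℝ => g (y • t)) (fderiv ℝ g (y • t) t) y := by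
    intro y
    have hray : HasDerivAt (fun y : ℝ => y • t) t y := by
      simpa using (hasDerivAt_id y).smul_const t
    exact ((hg.differentiable (by simp) _).hasFDerivAt).comp_hasDerivAt y hray
  have hint : IntervalIntegrable (fun y => fderiv ℝ g (y • t) t) volume 0 1 := by
    apply Continuous.intervalIntegrable
    exact ((hg.continuous_fderiv (by simp)).comp (continuous_id.smul continuous_const)).clm_apply
      continuous_const
  have := intervalIntegral.integral_eq_sub_of_hasDerivAt (fun y _ => key y) hint
  simpa using this

lemma fderiv_apply_decomp (g : ℝ × ℝ → ℝ) (x t : ℝ × ℝ) :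
    fderiv ℝ g x t = t.1 * d1 g x + t.2 * d2 g x := by
  have h := clm_decomp (fderiv ℝ g x) t
  simpa [d1, d2] using h

lemma sq_ae_eq : (Ico (0:ℝ) 1 ×ˢ Ico (0:ℝ) 1 : Set (ℝ × ℝ)) =ᵐ[volume]
    Icc ((0,0) : ℝ × ℝ) (1,1) := by
  rw [Icc_prod_eq]
  rw [Filter.eventuallyEq_set]
  have h0 : volume (({(1:ℝ)} ×ˢ (univ : Set ℝ)) ∪ ((univ : Set ℝ) ×ˢ {(1:ℝ)})) = 0 := by
    apply measure_union_null <;>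
      · rw [Measure.volume_eq_prod, Measure.prod_prod]; simp
  filter_upwards [measure_eq_zero_iff_ae_notMem.1 h0] with p hp
  simp only [mem_prod, mem_Ico, mem_Icc]
  constructor
  · rintro ⟨⟨h1, h2⟩, h3, h4⟩; exact ⟨⟨h1, h2.le⟩, h3, h4.le⟩
  · rintro ⟨⟨h1, h2⟩, h3, h4⟩
    simp only [mem_union, mem_prod, mem_singleton_iff, mem_univ, and_true, true_and] at hp
    push_neg at hp
    exact ⟨⟨h1, lt_of_le_of_ne h2 hp.1⟩, h3, lt_of_le_of_ne h4 hp.2⟩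

/-- Flux quantization: for a smooth lattice state `(ψ, A)` with respect to the
lattice generated by `t₁, t₂`, with `ψ` nonvanishing on the boundary of the
fundamental cell `Ω`, the magnetic flux through `Ω` equals `2πn` for some `n ∈ ℤ`. -/

theorem flux_quantization (t₁ t₂ : ℝ × ℝ) (hind : LinearIndependent ℝ ![t₁, t₂])
    (ψ : ℝ × ℝ → ℂ) (A : ℝ × ℝ → ℝ × ℝ)
    (hψ : ContDiff ℝ (⊤ : ℕ∞) ψ) (hA : ContDiff ℝ (⊤ : ℕ∞) A)
    (hlattice : ∀ m k : ℤ, ∃ g : ℝ × ℝ → ℝ, ContDiff ℝ (⊤ : ℕ∞) g ∧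
      (∀ x, ψ (x + (m • t₁ + k • t₂)) = Complex.exp (I * g x) * ψ x) ∧
      (∀ x, A (x + (m • t₁ + k • t₂)) = A x + (d1 g x, d2 g x)))
    (Ω : Set (ℝ × ℝ))
    (hΩ : Ω = (fun p : ℝ × ℝ => p.1 • t₁ + p.2 • t₂) '' (Ico (0:ℝ) 1 ×ˢ Ico (0:ℝ) 1))
    (hbd : ∀ x ∈ frontier Ω, ψ x ≠ 0) :
    ∃ n : ℤ, ∫ x in Ω, curl A x = 2 * π * n := by
  have hDne := pair_det_ne_zero hind
  have hinj := Lmap_inj hind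
  set L := Lmap t₁ t₂ with hLdef
  set D := t₁.1 * t₂.2 - t₁.2 * t₂.1 with hD
  have hΩL : Ω = L '' (Ico (0:ℝ) 1 ×ˢ Ico (0:ℝ) 1) := by
    have hfun : (fun p : ℝ × ℝ => p.1 • t₁ + p.2 • t₂) = ⇑L :=
      funext fun p => (Lmap_apply t₁ t₂ p).symm
    rw [hΩ, hfun]
  have hψ0 : ψ 0 ≠ 0 := hbd 0 (by rw [hΩL]; exact zero_mem_frontier hinj)
  obtain ⟨g₁, hg₁, hψ₁, hA₁⟩ := hlattice 1 0
  obtain ⟨g₂, hg₂, hψ₂, hA₂⟩ := hlattice 0 1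
  simp only [one_smul, zero_smul, add_zero, zero_add] at hψ₁ hA₁ hψ₂ hA₂
  -- phase quantization at the corner
  obtain ⟨n, hn⟩ : ∃ n : ℤ, g₁ t₂ + g₂ 0 - (g₂ t₁ + g₁ 0) = 2 * π * n := by
    have e1 : ψ (t₁ + t₂) = Complex.exp (I * g₁ t₂ + I * g₂ 0) * ψ 0 := by
      rw [add_comm t₁ t₂, hψ₁ t₂, Complex.exp_add, mul_assoc]
      congr 1
      have := hψ₂ 0; rw [zero_add] at this; rw [this]
    have e2 : ψ (t₁ + t₂) = Complex.exp (I * g₂ t₁ + I * g₁ 0) * ψ 0 := by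
      rw [hψ₂ t₁, Complex.exp_add, mul_assoc]
      congr 1
      have := hψ₁ 0; rw [zero_add] at this; rw [this]
    rw [e2] at e1
    have e3 := mul_right_cancel₀ hψ0 e1
    rw [Complex.exp_eq_exp_iff_exists_int] at e3
    obtain ⟨n, hn⟩ := e3
    refine ⟨-n, ?_⟩
    have him := congrArg Complex.im hn
    simp [Complex.add_im, Complex.mul_im, Complex.I_im, Complex.I_re,
      Complex.ofReal_re, Complex.ofReal_im] at him
    push_cast at him ⊢
    linarith
  -- divergence theorem data
  have hAd : Differentiable ℝ A := hA.differentiable (by simp)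
  set f : ℝ × ℝ → ℝ := fun p => phi t₂ (A (L p)) with hf
  set g : ℝ × ℝ → ℝ := fun p => -(phi t₁ (A (L p))) with hg
  set f' : ℝ × ℝ → (ℝ × ℝ) →L[ℝ] ℝ :=
    fun p => ((phi t₂).comp (fderiv ℝ A (L p))).comp L with hf'
  set g' : ℝ × ℝ → (ℝ × ℝ) →L[ℝ] ℝ :=
    fun p => -(((phi t₁).comp (fderiv ℝ A (L p))).comp L) with hg'
  have hLe1 : L (1, 0) = t₁ := by rw [Lmap_apply]; simp
  have hLe2 : L (0, 1) = t₂ := by rw [Lmap_apply]; simp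
  have hdf : ∀ p, HasFDerivAt f (f' p) p := by
    intro p
    exact (phi t₂).hasFDerivAt.comp p ((hAd (L p)).hasFDerivAt.comp p L.hasFDerivAt)
  have hdg : ∀ p, HasFDerivAt g (g' p) p := by
    intro p
    exact ((phi t₁).hasFDerivAt.comp p ((hAd (L p)).hasFDerivAt.comp p L.hasFDerivAt)).neg
  have hkey : ∀ p, f' p (1, 0) + g' p (0, 1) = D * curl A (L p) := by
    intro p
    have : f' p (1, 0) + g' p (0, 1)
        = phi t₂ (fderiv ℝ A (L p) t₁) - phi t₁ (fderiv ℝ A (L p) t₂) := by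
      simp [hf', hg', hLe1, hLe2, sub_eq_add_neg]
    rw [this, curl_pullback t₁ t₂ A (L p) (hAd (L p))]
  have hContDA : Continuous fun p => fderiv ℝ A (L p) :=
    (hA.continuous_fderiv (by simp)).comp L.continuous
  have hcont_f : Continuous f := (phi t₂).continuous.comp (hAd.continuous.comp L.continuous)
  have hcont_g : Continuous g := ((phi t₁).continuous.comp (hAd.continuous.comp L.continuous)).neg
  have hcont_int : Continuous fun p => f' p (1, 0) + g' p (0, 1) := by
    have h1 : Continuous fun p => phi t₂ ((fderiv ℝ A (L p)) (L (1, 0))) :=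
      (phi t₂).continuous.comp (hContDA.clm_apply continuous_const)
    have h2 : Continuous fun p => phi t₁ ((fderiv ℝ A (L p)) (L (0, 1))) :=
      (phi t₁).continuous.comp (hContDA.clm_apply continuous_const)
    exact h1.add h2.neg
  have hle : ((0, 0) : ℝ × ℝ) ≤ (1, 1) := ⟨zero_le_one, zero_le_one⟩
  have hdiv := integral_divergence_prod_Icc_of_hasFDerivAt_off_countable_of_le
    f g f' g' (0, 0) (1, 1) hle ∅ countable_empty
    hcont_f.continuousOn hcont_g.continuousOn
    (fun x _ => hdf x) (fun x _ => hdg x)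
    (hcont_int.continuousOn.integrableOn_compact isCompact_Icc)
  -- boundary term computations
  have hB2 : (∫ y in (0:ℝ)..1, f (1, y)) - ∫ y in (0:ℝ)..1, f (0, y) = g₁ t₂ - g₁ 0 := by
    have hfc1 : IntervalIntegrable (fun y : ℝ => f (1, y)) volume 0 1 := by
      apply Continuous.intervalIntegrable
      exact hcont_f.comp (continuous_const.prodMk continuous_id)
    have hfc0 : IntervalIntegrable (fun y : ℝ => f (0, y)) volume 0 1 := by
      apply Continuous.intervalIntegrable
      exact hcont_f.comp (continuous_const.prodMk continuous_id)
    rw [← intervalIntegral.integral_sub hfc1 hfc0]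
    rw [← ray_integral g₁ hg₁ t₂]
    apply intervalIntegral.integral_congr
    intro y _
    have hL1 : L ((1:ℝ), y) = y • t₂ + t₁ := by rw [Lmap_apply]; simp [add_comm]
    have hL0 : L ((0:ℝ), y) = y • t₂ := by rw [Lmap_apply]; simp
    simp only [hf, hL1, hL0, hA₁ (y • t₂)]
    rw [map_add, fderiv_apply_decomp g₁ (y • t₂) t₂]
    simp only [phi_apply]
    ring
  have hB1 : (∫ x in (0:ℝ)..1, g (x, 1)) - ∫ x in (0:ℝ)..1, g (x, 0) = -(g₂ t₁ - g₂ 0) := by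
    have hgc1 : IntervalIntegrable (fun x : ℝ => g (x, 1)) volume 0 1 := by
      apply Continuous.intervalIntegrable
      exact hcont_g.comp (continuous_id.prodMk continuous_const)
    have hgc0 : IntervalIntegrable (fun x : ℝ => g (x, 0)) volume 0 1 := by
      apply Continuous.intervalIntegrable
      exact hcont_g.comp (continuous_id.prodMk continuous_const)
    rw [← intervalIntegral.integral_sub hgc1 hgc0]
    rw [show -(g₂ t₁ - g₂ 0) = -∫ x in (0:ℝ)..1, fderiv ℝ g₂ (x • t₁) t₁ from by
      rw [ray_integral g₂ hg₂ t₁]]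
    rw [← intervalIntegral.integral_neg]
    apply intervalIntegral.integral_congr
    intro x _
    have hL1 : L (x, (1:ℝ)) = x • t₁ + t₂ := by rw [Lmap_apply]; simp
    have hL0 : L (x, (0:ℝ)) = x • t₁ := by rw [Lmap_apply]; simp
    simp only [hg, hL1, hL0, hA₂ (x • t₁)]
    rw [map_add, fderiv_apply_decomp g₂ (x • t₁) t₁]
    simp only [phi_apply]
    ring
  -- the integral over the closed square
  have hS : ∫ x in Icc ((0,0) : ℝ × ℝ) (1,1), D * curl A (L x) = 2 * π * n := by
    have : ∫ x in Icc ((0,0) : ℝ × ℝ) (1,1), D * curl A (L x)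
        = ∫ x in Icc ((0,0) : ℝ × ℝ) (1,1), (f' x (1, 0) + g' x (0, 1)) := by
      apply setIntegral_congr_fun measurableSet_Icc
      intro x _
      exact (hkey x).symm
    have hproj : ∀ z : ℝ × ℝ, z = (z.1, z.2) := fun z => rfl
    rw [this, hdiv]
    show (((∫ x in (0:ℝ)..1, g (x, 1)) - ∫ x in (0:ℝ)..1, g (x, 0)) +
        ∫ y in (0:ℝ)..1, f (1, y)) - ∫ y in (0:ℝ)..1, f (0, y) = 2 * π * n
    linarith [hB1, hB2, hn]
  -- change of variables
  have hsq_meas : MeasurableSet (Ico (0:ℝ) 1 ×ˢ Ico (0:ℝ) 1) :=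
    measurableSet_Ico.prod measurableSet_Ico
  have hcov : ∫ x in Ω, curl A x
      = ∫ p in Ico (0:ℝ) 1 ×ˢ Ico (0:ℝ) 1, |D| * curl A (L p) := by
    rw [hΩL]
    rw [integral_image_eq_integral_abs_det_fderiv_smul volume hsq_meas
      (fun x _ => L.hasFDerivAt.hasFDerivWithinAt) hinj.injOn (curl A)]
    apply setIntegral_congr_fun hsq_meas
    intro p _
    simp only [hLdef, Lmap_det, smul_eq_mul, hD]
  rw [hcov, setIntegral_congr_set sq_ae_eq]
  rcases le_or_gt 0 D with hsgn | hsgn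
  · refine ⟨n, ?_⟩
    rw [show (fun p => |D| * curl A (L p)) = fun p => D * curl A (L p) from by
      funext p; rw [_root_.abs_of_nonneg hsgn]]
    exact hS
  · refine ⟨-n, ?_⟩
    rw [show (fun p => |D| * curl A (L p)) = fun p => -(D * curl A (L p)) from by
      funext p; rw [_root_.abs_of_neg hsgn]; ring]
    rw [integral_neg, hS]
    push_cast
    ring
end
end
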